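/- Let (φ, d) ∈ X(0,T) be a solution of the reformulated problem. If N(T) is sufficiently small, then there exists a constant C > 0 independent of T such that, pointwise on (0,∞)×[0,T] (with U and its derivatives evaluated at x − s·t − d(t)): |F| ≤ C·φ_x²; |F_x| ≤ C·(|U_x|·φ_x² + |φ_x|·|φ_{xx}|); |F_{xx}| ≤ C·[ (U_x² + |U_{xx}|)·φ_x² + φ_{xx}² + |U_x|·|φ_x|·|φ_{xx}| + |φ_x|·|φ_{xxx}| ]; and |F_{xxx}| ≤ C·[ (|U_x|³ + |U_x|·|U_{xx}| + |U_{xxx}|)·φ_x² + (U_x² + |U_{xx}|)·|φ_x|·|φ_{xx}| + |U_x|·|φ_x|·|φ_{xxx}| + |φ_x|·|φ_{xxxx}| + |U_x|·φ_{xx}² + |φ_{xx}|³ + |φ_{xx}|·|φ_{xxx}| ]. -/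

import Mathlib

open MeasureTheory Real Filter Topology Set

noncomputable section

/-- `n`-th partial derivative in the first (space) variable. -/
def dxn (n : ℕ) (φ : ℝ → ℝ → ℝ) (x t : ℝ) : ℝ := iteratedDeriv n (fun y => φ y t) x

/-- partial derivative in the second (time) variable. -/
def dt1 (φ : ℝ → ℝ → ℝ) (x t : ℝ) : ℝ := deriv (fun τ => φ x τ) t

/-- Japanese bracket `⟨y⟩ = √(1+y²)`. -/
def jb (y : ℝ) : ℝ := Real.sqrt (1 + y ^ 2)

/-- One-sided Japanese bracket `⟨y⟩₊`. -/
def jbp (y : ℝ) : ℝ := if 0 ≤ y then Real.sqrt (1 + y ^ 2) else 1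

/-- A viscous shock profile for `u_t + f(u)_x = (u^{m-1} u_x)_x` with speed `s`. -/
def IsShockProfile (m um s : ℝ) (f U : ℝ → ℝ) : Prop :=
  ContDiff ℝ (⊤ : ℕ∞) U ∧ (∀ z, 0 < U z ∧ U z < um) ∧
  (∀ z, deriv U z = U z ^ (1 - m) * (f (U z) - s * U z)) ∧
  Tendsto U atBot (nhds um) ∧ Tendsto U atTop (nhds 0)

/-- The nonlinearity `F = −[f(U+φₓ) − f(U) − f′(U)·φₓ]`. -/
def Fnl (f : ℝ → ℝ) (u p : ℝ) : ℝ := -(f (u + p) - f u - deriv f u * p)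

/-- The nonlinearity `G = (U+φₓ)^m − U^m − m·φₓ·U^{m−1}`. -/
def Gnl (m u p : ℝ) : ℝ := (u + p) ^ m - u ^ m - m * p * u ^ (m - 1)

/-- `(φ, d)` solves the reformulated problem on `[0,T]`. -/
structure Reformulated (m um s d₀ T : ℝ) (f U : ℝ → ℝ)
    (φ : ℝ → ℝ → ℝ) (d : ℝ → ℝ) : Prop where
  φ_smooth : ContDiff ℝ (⊤ : ℕ∞) (fun p : ℝ × ℝ => φ p.1 p.2)
  d_C1 : ContDiff ℝ 1 d
  d_init : d 0 = d₀
  pde : ∀ x, 0 < x → ∀ t, t ∈ Set.Ioc (0:ℝ) T →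
    dt1 φ x t + deriv f (U (x - s * t - d t)) * dxn 1 φ x t
      - deriv (fun y => U (y - s * t - d t) ^ (m - 1) * dxn 1 φ y t) x
      = deriv d t * U (x - s * t - d t)
        + Fnl f (U (x - s * t - d t)) (dxn 1 φ x t)
        + deriv (fun y => Gnl m (U (y - s * t - d t)) (dxn 1 φ y t)) x / m
  bc : ∀ t, t ∈ Set.Ioc (0:ℝ) T →
    -(deriv d t) * U (-(s * t) - d t) + f um - f (U (-(s * t) - d t))
      - deriv (fun y => U (y - s * t - d t) ^ (m - 1) * dxn 1 φ y t) 0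
      = deriv (fun y => Gnl m (U (y - s * t - d t)) (dxn 1 φ y t)) 0 / m
  bdry : ∀ t, φ 0 t = 0
  decay : ∀ t, Tendsto (fun x => φ x t) atTop (nhds 0)

/-- The quantity inside the supremum defining `N(T)`. -/
def Nfun (m s β d₀ : ℝ) (U : ℝ → ℝ) (φ : ℝ → ℝ → ℝ) (d : ℝ → ℝ) (t : ℝ) : ℝ :=
  (∫ x in Ioi (0:ℝ), U (x - s * t - d t) ^ (1 - 3 * m) * (φ x t) ^ 2) ^ (1/2 : ℝ)
  + (∫ x in Ioi (0:ℝ), U (x - s * t - d t) ^ (-(1 + m)) * (dxn 1 φ x t) ^ 2) ^ (1/2 : ℝ)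
  + (∫ x in Ioi (0:ℝ), U (x - s * t - d t) ^ (m - 3) * (dxn 2 φ x t) ^ 2) ^ (1/2 : ℝ)
  + (∑ j ∈ Finset.range 4, ∫ x in Ioi (0:ℝ),
      jb (x - s * t - d t) ^ (β + (j : ℝ)) * (dxn j φ x t) ^ 2) ^ (1/2 : ℝ)
  + (d₀ + t) ^ ((β + 3) / 2) * |dxn 2 φ 0 t|
  + (∫ τ in Set.Ioc (0:ℝ) t, (d₀ + τ) ^ (β + 3) * (dxn 2 φ 0 τ) ^ 2) ^ (1/2 : ℝ)

/-- `N(T)`, the supremum over `t ∈ [0,T]`. -/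
def Nsup (m s β d₀ : ℝ) (U : ℝ → ℝ) (φ : ℝ → ℝ → ℝ) (d : ℝ → ℝ) (T : ℝ) : ℝ :=
  sSup (Nfun m s β d₀ U φ d '' Icc 0 T)

/-- Membership `(φ, d) ∈ X(0,T)`. -/
def MemX (m s β d₀ T : ℝ) (U : ℝ → ℝ) (φ : ℝ → ℝ → ℝ) (d : ℝ → ℝ) : Prop :=
  BddAbove (Nfun m s β d₀ U φ d '' Icc 0 T) ∧
  (∀ t ∈ Icc (0:ℝ) T,
    IntegrableOn (fun x => U (x - s * t - d t) ^ (1 - 3 * m) * (φ x t) ^ 2) (Ioi 0) ∧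
    IntegrableOn (fun x => U (x - s * t - d t) ^ (-(1 + m)) * (dxn 1 φ x t) ^ 2) (Ioi 0) ∧
    IntegrableOn (fun x => U (x - s * t - d t) ^ (m - 3) * (dxn 2 φ x t) ^ 2) (Ioi 0) ∧
    ∀ j : ℕ, j < 4 → IntegrableOn
      (fun x => jb (x - s * t - d t) ^ (β + (j : ℝ)) * (dxn j φ x t) ^ 2) (Ioi 0)) ∧
  IntegrableOn (fun p : ℝ × ℝ =>
      U (p.1 - s * p.2 - d p.2) ^ (-(2 * m)) * (dxn 1 φ p.1 p.2) ^ 2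
      + U (p.1 - s * p.2 - d p.2) ^ (-2 : ℝ) * (dxn 2 φ p.1 p.2) ^ 2
      + U (p.1 - s * p.2 - d p.2) ^ (2 * m - 4) * (dxn 3 φ p.1 p.2) ^ 2
      + ∑ j ∈ Finset.range 4,
          jb (p.1 - s * p.2 - d p.2) ^ (β + (j : ℝ)) * U (p.1 - s * p.2 - d p.2) ^ (m - 1)
            * (dxn (j + 1) φ p.1 p.2) ^ 2)
    (Ioi 0 ×ˢ Ioc 0 T) ∧
  ∃ M, ∀ t ∈ Icc (0:ℝ) T, |d t - d₀| ≤ M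



section AUX

def hjx (f : ℝ → ℝ) (j : ℕ) : ℝ → ℝ := iteratedDeriv j f

lemma hj_smooth {f : ℝ → ℝ} (hf : ContDiff ℝ (⊤ : ℕ∞) f) (j : ℕ) : ContDiff ℝ (⊤ : ℕ∞) (hjx f j) := by
  unfold hjx
  rw [iteratedDeriv_eq_iterate]
  exact ContDiff.iterate_deriv j hf

lemma hj_diff {f : ℝ → ℝ} (hf : ContDiff ℝ (⊤ : ℕ∞) f) (j : ℕ) (x : ℝ) :
    DifferentiableAt ℝ (hjx f j) x :=
  ((hj_smooth hf j).differentiable (by simp)).differentiableAt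

lemma hj_deriv {f : ℝ → ℝ} (j : ℕ) : deriv (hjx f j) = hjx f (j+1) :=
  iteratedDeriv_succ.symm

lemma hj_hasDerivAt {f : ℝ → ℝ} (hf : ContDiff ℝ (⊤ : ℕ∞) f) (j : ℕ) (x : ℝ) :
    HasDerivAt (hjx f j) (hjx f (j+1) x) x := by
  rw [show hjx f (j+1) = deriv (hjx f j) from (hj_deriv j).symm]
  exact (hj_diff hf j x).hasDerivAt

lemma DjBound {f : ℝ → ℝ} (hf : ContDiff ℝ (⊤ : ℕ∞) f) (j : ℕ) {um M : ℝ} (hum : 0 ≤ um)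
    (hMb : ∀ z ∈ Icc (-1:ℝ) (um+1), |hjx f (j+1) z| ≤ M)
    {u q : ℝ} (hu : 0 ≤ u) (hu2 : u ≤ um) (hq : |q| ≤ 1) :
    |hjx f j (u + q) - hjx f j u| ≤ M * |q| := by
  have hq' := abs_le.mp hq
  have hmem1 : u ∈ Icc (-1:ℝ) (um+1) := ⟨by linarith, by linarith⟩
  have hmem2 : u + q ∈ Icc (-1:ℝ) (um+1) := ⟨by linarith, by linarith⟩
  have h := Convex.norm_image_sub_le_of_norm_deriv_le (f := hjx f j)
    (fun z _ => hj_diff hf j z)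
    (fun z hz => by rw [hj_deriv]; exact (Real.norm_eq_abs _) ▸ hMb z hz)
    (convex_Icc _ _) hmem1 hmem2
  simpa [Real.norm_eq_abs, add_sub_cancel_left] using h

lemma EjBound {f : ℝ → ℝ} (hf : ContDiff ℝ (⊤ : ℕ∞) f) (j : ℕ) {um M : ℝ} (hum : 0 ≤ um)
    (hM2 : ∀ z ∈ Icc (-1:ℝ) (um+1), |hjx f (j+2) z| ≤ M)
    {u q : ℝ} (hu : 0 ≤ u) (hu2 : u ≤ um) (hq : |q| ≤ 1) :
    |hjx f j (u + q) - hjx f j u - hjx f (j+1) u * q| ≤ M * q ^ 2 := by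
  have hq' := abs_le.mp hq
  set F : ℝ → ℝ := fun z => hjx f j z - hjx f (j+1) u * z with hF
  have hsub : uIcc u (u+q) ⊆ Icc (-1:ℝ) (um+1) := by
    apply uIcc_subset_Icc ⟨by linarith, by linarith⟩ ⟨by linarith, by linarith⟩
  have hzu : ∀ z ∈ uIcc u (u+q), |z - u| ≤ |q| := by
    intro z hz
    rcases le_total 0 q with hq0 | hq0
    · rw [uIcc_of_le (by linarith)] at hz
      rw [abs_of_nonneg hq0, abs_le]
      exact ⟨by linarith [hz.1], by linarith [hz.2]⟩
    · rw [uIcc_of_ge (by linarith)] at hz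
      rw [abs_of_nonpos hq0, abs_le]
      exact ⟨by linarith [hz.1], by linarith [hz.2]⟩
  have hdF : ∀ z : ℝ, DifferentiableAt ℝ F z := fun z =>
    (hj_diff hf j z).sub ((differentiable_id.const_mul _) _)
  have hderivF : ∀ z : ℝ, deriv F z = hjx f (j+1) z - hjx f (j+1) u := by
    intro z
    have h1 : HasDerivAt F (hjx f (j+1) z - hjx f (j+1) u * 1) z :=
      (hj_hasDerivAt hf j z).sub ((hasDerivAt_id z).const_mul (hjx f (j+1) u))
    simpa using h1.deriv
  have hb : ∀ z ∈ uIcc u (u+q), ‖deriv F z‖ ≤ M * |q| := by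
    intro z hz
    rw [Real.norm_eq_abs, hderivF]
    have h2 : |hjx f (j+1) z - hjx f (j+1) u| ≤ M * |z - u| := by
      have := Convex.norm_image_sub_le_of_norm_deriv_le (f := hjx f (j+1)) (x := u) (y := z)
        (fun w _ => hj_diff hf (j+1) w)
        (fun w hw => by rw [hj_deriv]; exact (Real.norm_eq_abs _) ▸ hM2 w hw)
        (convex_Icc _ _) ⟨by linarith, by linarith⟩ (hsub hz)
      simpa [Real.norm_eq_abs] using this
    have hM0 : 0 ≤ M := le_trans (abs_nonneg _) (hM2 u ⟨by linarith, by linarith⟩)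
    calc |hjx f (j+1) z - hjx f (j+1) u| ≤ M * |z - u| := h2
      _ ≤ M * |q| := by
          exact mul_le_mul_of_nonneg_left (hzu z hz) hM0
  have h := Convex.norm_image_sub_le_of_norm_deriv_le (f := F)
    (fun z _ => hdF z) hb (convex_uIcc _ _) left_mem_uIcc right_mem_uIcc
  have hFval : F (u+q) - F u = hjx f j (u + q) - hjx f j u - hjx f (j+1) u * q := by
    simp only [hF]; ring
  rw [Real.norm_eq_abs, Real.norm_eq_abs, hFval, add_sub_cancel_left] at h
  calc |hjx f j (u + q) - hjx f j u - hjx f (j+1) u * q| ≤ M * |q| * |q| := h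
    _ = M * q ^ 2 := by rw [mul_assoc, abs_mul_abs_self]; ring



def Dj (f v p : ℝ → ℝ) (j : ℕ) (y : ℝ) : ℝ := hjx f j (v y + p y) - hjx f j (v y)
def Ej (f v p : ℝ → ℝ) (j : ℕ) (y : ℝ) : ℝ :=
  hjx f j (v y + p y) - hjx f j (v y) - hjx f (j+1) (v y) * p y

lemma smooth_dAt {g : ℝ → ℝ} (hg : ContDiff ℝ (⊤ : ℕ∞) g) (x : ℝ) :
    HasDerivAt g (deriv g x) x :=
  ((hg.differentiable (by simp)).differentiableAt).hasDerivAt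

section
variable {f v p : ℝ → ℝ}
variable (hf : ContDiff ℝ (⊤ : ℕ∞) f) (hv : ContDiff ℝ (⊤ : ℕ∞) v) (hp : ContDiff ℝ (⊤ : ℕ∞) p)
include hf hv hp

lemma hasDerivAt_hjw (j : ℕ) (x : ℝ) :
    HasDerivAt (fun y => hjx f j (v y + p y))
      (hjx f (j+1) (v x + p x) * (deriv v x + deriv p x)) x := by
  have := (hj_hasDerivAt hf j (v x + p x)).comp x ((smooth_dAt hv x).add (smooth_dAt hp x))
  exact this

omit hp in
lemma hasDerivAt_hjv (j : ℕ) (x : ℝ) :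
    HasDerivAt (fun y => hjx f j (v y)) (hjx f (j+1) (v x) * deriv v x) x := by
  have := (hj_hasDerivAt hf j (v x)).comp x (smooth_dAt hv x)
  exact this

lemma hasDerivAt_Dj (j : ℕ) (x : ℝ) :
    HasDerivAt (Dj f v p j)
      (Dj f v p (j+1) x * deriv v x + hjx f (j+1) (v x + p x) * deriv p x) x := by
  have h := (hasDerivAt_hjw hf hv hp j x).sub (hasDerivAt_hjv hf hv j x)
  refine h.congr_deriv ?_
  unfold Dj; ring

lemma hasDerivAt_Ej (j : ℕ) (x : ℝ) :
    HasDerivAt (Ej f v p j)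
      (Ej f v p (j+1) x * deriv v x + Dj f v p (j+1) x * deriv p x) x := by
  have h := ((hasDerivAt_hjw hf hv hp j x).sub (hasDerivAt_hjv hf hv j x)).sub
    ((hasDerivAt_hjv hf hv (j+1) x).mul (smooth_dAt hp x))
  refine h.congr_deriv ?_
  unfold Ej Dj; ring

end


section POLY

lemma mono_mul' {a b A B : ℝ} (ha : |a| ≤ A) (hb : |b| ≤ B) : |a * b| ≤ A * B := by
  rw [abs_mul]
  exact mul_le_mul ha hb (abs_nonneg _) (le_trans (abs_nonneg _) ha)

lemma abs_add_le' {a b A B : ℝ} (ha : |a| ≤ A) (hb : |b| ≤ B) : |a + b| ≤ A + B :=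
  (abs_add_le a b).trans (add_le_add ha hb)

lemma abs_sq_le' (a : ℝ) : |a ^ 2| ≤ a ^ 2 := le_of_eq (abs_of_nonneg (sq_nonneg a))

lemma abs_pow_le' (a : ℝ) (n : ℕ) : |a ^ n| ≤ |a| ^ n := le_of_eq (abs_pow a n)

variable {M q v1 v2 v3 p1 p2 p3 e1 e2 e3 d1 d2 d3 a2 a3 : ℝ}

lemma poly0 (hM : 1 ≤ M) (he : |e1| ≤ M * q ^ 2) : |-e1| ≤ 3 * M * q ^ 2 := by
  rw [abs_neg]
  nlinarith [sq_nonneg q, abs_nonneg e1]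

lemma poly1 (hM : 1 ≤ M) (he1 : |e1| ≤ M * q ^ 2) (hd1 : |d1| ≤ M * |q|) :
    |-(e1 * v1 + d1 * p1)| ≤ 3 * M * (|v1| * q ^ 2 + |q| * |p1|) := by
  rw [abs_neg]
  have h := abs_add_le' (mono_mul' he1 (le_refl |v1|)) (mono_mul' hd1 (le_refl |p1|))
  refine h.trans ?_
  have hM0 : (0:ℝ) ≤ M := by linarith
  have n1 : 0 ≤ M * q ^ 2 * |v1| := by positivity
  have n2 : 0 ≤ M * |q| * |p1| := by positivity
  nlinarith [n1, n2]

lemma poly2 (hM : 1 ≤ M) (he1 : |e1| ≤ M * q ^ 2) (he2 : |e2| ≤ M * q ^ 2)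
    (hd1 : |d1| ≤ M * |q|) (hd2 : |d2| ≤ M * |q|) (ha2 : |a2| ≤ M) :
    |-((e2 * v1 + d2 * p1) * v1 + e1 * v2
        + ((d2 * v1 + a2 * p1) * p1 + d1 * p2))|
      ≤ 3 * M * ((v1 ^ 2 + |v2|) * q ^ 2 + p1 ^ 2 + |v1| * |q| * |p1| + |q| * |p2|) := by
  have hsplit : -((e2 * v1 + d2 * p1) * v1 + e1 * v2 + ((d2 * v1 + a2 * p1) * p1 + d1 * p2))
      = -(e2 * v1 ^ 2 + d2 * (v1 * p1) + e1 * v2 + d2 * (v1 * p1) + a2 * p1 ^ 2 + d1 * p2) := by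
    ring
  rw [hsplit, abs_neg]
  have h := abs_add_le' (abs_add_le' (abs_add_le' (abs_add_le' (abs_add_le'
    (mono_mul' he2 (abs_sq_le' v1))
    (mono_mul' hd2 (mono_mul' (le_refl |v1|) (le_refl |p1|))))
    (mono_mul' he1 (le_refl |v2|)))
    (mono_mul' hd2 (mono_mul' (le_refl |v1|) (le_refl |p1|))))
    (mono_mul' ha2 (abs_sq_le' p1)))
    (mono_mul' hd1 (le_refl |p2|))
  refine h.trans ?_
  have hM0 : (0:ℝ) ≤ M := by linarith
  have n1 : 0 ≤ M * q ^ 2 * v1 ^ 2 := by positivity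
  have n2 : 0 ≤ M * |q| * (|v1| * |p1|) := by positivity
  have n3 : 0 ≤ M * q ^ 2 * |v2| := by positivity
  have n4 : 0 ≤ M * p1 ^ 2 := by positivity
  have n5 : 0 ≤ M * |q| * |p2| := by positivity
  nlinarith [n1, n2, n3, n4, n5]

set_option maxHeartbeats 2000000 in
lemma poly3 (hM : 1 ≤ M)
    (he1 : |e1| ≤ M * q ^ 2) (he2 : |e2| ≤ M * q ^ 2) (he3 : |e3| ≤ M * q ^ 2)
    (hd1 : |d1| ≤ M * |q|) (hd2 : |d2| ≤ M * |q|) (hd3 : |d3| ≤ M * |q|)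
    (ha2 : |a2| ≤ M) (ha3 : |a3| ≤ M) :
    |-(((((e3 * v1 + d3 * p1) * v1 + e2 * v2 + ((d3 * v1 + a3 * p1) * p1 + d2 * p2)) * v1
          + (e2 * v1 + d2 * p1) * v2)
        + ((e2 * v1 + d2 * p1) * v2 + e1 * v3))
      + ((((d3 * v1 + a3 * p1) * v1 + d2 * v2 + (a3 * (v1 + p1) * p1 + a2 * p2)) * p1
          + (d2 * v1 + a2 * p1) * p2)
        + ((d2 * v1 + a2 * p1) * p2 + d1 * p3)))|
      ≤ 3 * M * ((|v1| ^ 3 + |v1| * |v2| + |v3|) * q ^ 2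
          + (v1 ^ 2 + |v2|) * |q| * |p1|
          + |v1| * |q| * |p2|
          + |q| * |p3|
          + |v1| * p1 ^ 2
          + |p1| ^ 3
          + |p1| * |p2|) := by
  have hsplit : -(((((e3 * v1 + d3 * p1) * v1 + e2 * v2 + ((d3 * v1 + a3 * p1) * p1 + d2 * p2)) * v1
          + (e2 * v1 + d2 * p1) * v2)
        + ((e2 * v1 + d2 * p1) * v2 + e1 * v3))
      + ((((d3 * v1 + a3 * p1) * v1 + d2 * v2 + (a3 * (v1 + p1) * p1 + a2 * p2)) * p1
          + (d2 * v1 + a2 * p1) * p2)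
        + ((d2 * v1 + a2 * p1) * p2 + d1 * p3)))
      = -(e3 * v1 ^ 3 + d3 * (v1 ^ 2 * p1) + e2 * (v1 * v2) + d3 * (v1 ^ 2 * p1)
          + a3 * (v1 * p1 ^ 2) + d2 * (v1 * p2) + e2 * (v1 * v2) + d2 * (v2 * p1)
          + e2 * (v1 * v2) + d2 * (v2 * p1) + e1 * v3
          + d3 * (v1 ^ 2 * p1) + a3 * (v1 * p1 ^ 2) + d2 * (v2 * p1) + a3 * (v1 * p1 ^ 2)
          + a3 * p1 ^ 3 + a2 * (p1 * p2) + d2 * (v1 * p2)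
          + d2 * (v1 * p2) + a2 * (p1 * p2) + d1 * p3 + a2 * (p1 * p2)) := by
    ring
  rw [hsplit, abs_neg]
  have b_d3 := mono_mul' hd3 (mono_mul' (abs_sq_le' v1) (le_refl |p1|))
  have b_e2 := mono_mul' he2 (mono_mul' (le_refl |v1|) (le_refl |v2|))
  have b_a3 := mono_mul' ha3 (mono_mul' (le_refl |v1|) (abs_sq_le' p1))
  have b_d2a := mono_mul' hd2 (mono_mul' (le_refl |v1|) (le_refl |p2|))
  have b_d2b := mono_mul' hd2 (mono_mul' (le_refl |v2|) (le_refl |p1|))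
  have b_a2 := mono_mul' ha2 (mono_mul' (le_refl |p1|) (le_refl |p2|))
  have h := abs_add_le' (abs_add_le' (abs_add_le' (abs_add_le' (abs_add_le' (abs_add_le'
    (abs_add_le' (abs_add_le' (abs_add_le' (abs_add_le' (abs_add_le' (abs_add_le'
    (abs_add_le' (abs_add_le' (abs_add_le' (abs_add_le' (abs_add_le' (abs_add_le'
    (abs_add_le' (abs_add_le' (abs_add_le'
    (mono_mul' he3 (abs_pow_le' v1 3))
    b_d3) b_e2) b_d3) b_a3) b_d2a) b_e2) b_d2b) b_e2) b_d2b)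
    (mono_mul' he1 (le_refl |v3|)))
    b_d3) b_a3) b_d2b) b_a3)
    (mono_mul' ha3 (abs_pow_le' p1 3)))
    b_a2) b_d2a) b_d2a) b_a2)
    (mono_mul' hd1 (le_refl |p3|)))
    b_a2
  refine h.trans ?_
  have hM0 : (0:ℝ) ≤ M := by linarith
  have n1 : 0 ≤ M * q ^ 2 * |v1| ^ 3 := by positivity
  have n2 : 0 ≤ M * |q| * (v1 ^ 2 * |p1|) := by positivity
  have n3 : 0 ≤ M * q ^ 2 * (|v1| * |v2|) := by positivity
  have n4 : 0 ≤ M * (|v1| * p1 ^ 2) := by positivity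
  have n5 : 0 ≤ M * |q| * (|v1| * |p2|) := by positivity
  have n6 : 0 ≤ M * |q| * (|v2| * |p1|) := by positivity
  have n7 : 0 ≤ M * q ^ 2 * |v3| := by positivity
  have n8 : 0 ≤ M * |p1| ^ 3 := by positivity
  have n9 : 0 ≤ M * (|p1| * |p2|) := by positivity
  have n10 : 0 ≤ M * |q| * |p3| := by positivity
  linarith [n1, n2, n3, n4, n5, n6, n7, n8, n9, n10]

end POLY

section MASTER
variable {f v p : ℝ → ℝ}

set_option maxHeartbeats 2000000 in
lemma Fnl_master (hf : ContDiff ℝ (⊤ : ℕ∞) f) (hv : ContDiff ℝ (⊤ : ℕ∞) v)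
    (hp : ContDiff ℝ (⊤ : ℕ∞) p)
    {um M : ℝ} (hum : 0 ≤ um) (hM : 1 ≤ M)
    (hMb : ∀ j : ℕ, 2 ≤ j → j ≤ 5 → ∀ z ∈ Icc (-1:ℝ) (um+1), |hjx f j z| ≤ M)
    (x : ℝ) (hv0 : 0 ≤ v x) (hvum : v x ≤ um) (hpx : |p x| ≤ 1) :
    |Fnl f (v x) (p x)| ≤ 3 * M * p x ^ 2 ∧
    |deriv (fun y => Fnl f (v y) (p y)) x|
      ≤ 3 * M * (|deriv v x| * p x ^ 2 + |p x| * |deriv p x|) ∧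
    |iteratedDeriv 2 (fun y => Fnl f (v y) (p y)) x|
      ≤ 3 * M * (((deriv v x) ^ 2 + |iteratedDeriv 2 v x|) * p x ^ 2 + deriv p x ^ 2
          + |deriv v x| * |p x| * |deriv p x| + |p x| * |iteratedDeriv 2 p x|) ∧
    |iteratedDeriv 3 (fun y => Fnl f (v y) (p y)) x|
      ≤ 3 * M * ((|deriv v x| ^ 3 + |deriv v x| * |iteratedDeriv 2 v x| + |iteratedDeriv 3 v x|) * p x ^ 2
          + ((deriv v x) ^ 2 + |iteratedDeriv 2 v x|) * |p x| * |deriv p x|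
          + |deriv v x| * |p x| * |iteratedDeriv 2 p x|
          + |p x| * |iteratedDeriv 3 p x|
          + |deriv v x| * deriv p x ^ 2
          + |deriv p x| ^ 3
          + |deriv p x| * |iteratedDeriv 2 p x|) := by
  have hEb : ∀ j : ℕ, j ≤ 3 → |Ej f v p j x| ≤ M * p x ^ 2 := fun j hj =>
    EjBound hf j hum (hMb (j+2) (by omega) (by omega)) hv0 hvum hpx
  have hDb : ∀ j : ℕ, 1 ≤ j → j ≤ 3 → |Dj f v p j x| ≤ M * |p x| := fun j h1 h2 =>
    DjBound hf j hum (hMb (j+1) (by omega) (by omega)) hv0 hvum hpx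
  have hq' := abs_le.mp hpx
  have hwmem : v x + p x ∈ Icc (-1:ℝ) (um+1) := ⟨by linarith, by linarith⟩
  have haw : ∀ j : ℕ, 2 ≤ j → j ≤ 3 → |hjx f j (v x + p x)| ≤ M := fun j h1 h2 =>
    hMb j h1 (by omega) _ hwmem
  have hg0 : (fun y => Fnl f (v y) (p y)) = fun y => -(Ej f v p 0 y) := by
    funext y
    simp only [Fnl, Ej, hjx, zero_add, iteratedDeriv_zero, iteratedDeriv_one]
  have hv1d : ∀ z, HasDerivAt (deriv v) (iteratedDeriv 2 v z) z := by
    intro z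
    have h := hj_hasDerivAt hv 1 z
    rwa [show hjx v 1 = deriv v from iteratedDeriv_one] at h
  have hp1d : ∀ z, HasDerivAt (deriv p) (iteratedDeriv 2 p z) z := by
    intro z
    have h := hj_hasDerivAt hp 1 z
    rwa [show hjx p 1 = deriv p from iteratedDeriv_one] at h
  have hv2d : ∀ z, HasDerivAt (iteratedDeriv 2 v) (iteratedDeriv 3 v z) z := fun z =>
    hj_hasDerivAt hv 2 z
  have hp2d : ∀ z, HasDerivAt (iteratedDeriv 2 p) (iteratedDeriv 3 p z) z := fun z =>
    hj_hasDerivAt hp 2 z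
  have hg1 : deriv (fun y => Fnl f (v y) (p y))
      = fun z => -(Ej f v p 1 z * deriv v z + Dj f v p 1 z * deriv p z) := by
    funext z
    rw [hg0]
    exact ((hasDerivAt_Ej hf hv hp 0 z).neg).deriv
  have hg2 : deriv (fun z => -(Ej f v p 1 z * deriv v z + Dj f v p 1 z * deriv p z))
      = fun z => -((Ej f v p 2 z * deriv v z + Dj f v p 2 z * deriv p z) * deriv v z
            + Ej f v p 1 z * iteratedDeriv 2 v z
            + ((Dj f v p 2 z * deriv v z + hjx f 2 (v z + p z) * deriv p z) * deriv p z
            + Dj f v p 1 z * iteratedDeriv 2 p z)) := by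
    funext z
    exact ((((hasDerivAt_Ej hf hv hp 1 z).mul (hv1d z)).add
      ((hasDerivAt_Dj hf hv hp 1 z).mul (hp1d z))).neg).deriv
  have e2 : iteratedDeriv 2 (fun y => Fnl f (v y) (p y))
      = deriv (deriv (fun y => Fnl f (v y) (p y))) := by
    rw [iteratedDeriv_eq_iterate]; rfl
  have e3 : iteratedDeriv 3 (fun y => Fnl f (v y) (p y))
      = deriv (deriv (deriv (fun y => Fnl f (v y) (p y)))) := by
    rw [iteratedDeriv_eq_iterate]; rfl
  have hg2' : iteratedDeriv 2 (fun y => Fnl f (v y) (p y))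
      = fun z => -((Ej f v p 2 z * deriv v z + Dj f v p 2 z * deriv p z) * deriv v z
            + Ej f v p 1 z * iteratedDeriv 2 v z
            + ((Dj f v p 2 z * deriv v z + hjx f 2 (v z + p z) * deriv p z) * deriv p z
            + Dj f v p 1 z * iteratedDeriv 2 p z)) := by
    rw [e2, hg1, hg2]
  have hg3 : deriv (fun z => -((Ej f v p 2 z * deriv v z + Dj f v p 2 z * deriv p z) * deriv v z
            + Ej f v p 1 z * iteratedDeriv 2 v z
            + ((Dj f v p 2 z * deriv v z + hjx f 2 (v z + p z) * deriv p z) * deriv p z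
            + Dj f v p 1 z * iteratedDeriv 2 p z)))
      = fun z => -(((((Ej f v p 3 z * deriv v z + Dj f v p 3 z * deriv p z) * deriv v z
              + Ej f v p 2 z * iteratedDeriv 2 v z
              + ((Dj f v p 3 z * deriv v z + hjx f 3 (v z + p z) * deriv p z) * deriv p z
                + Dj f v p 2 z * iteratedDeriv 2 p z)) * deriv v z
            + (Ej f v p 2 z * deriv v z + Dj f v p 2 z * deriv p z) * iteratedDeriv 2 v z)
          + ((Ej f v p 2 z * deriv v z + Dj f v p 2 z * deriv p z) * iteratedDeriv 2 v z
            + Ej f v p 1 z * iteratedDeriv 3 v z))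
        + ((((Dj f v p 3 z * deriv v z + hjx f 3 (v z + p z) * deriv p z) * deriv v z
              + Dj f v p 2 z * iteratedDeriv 2 v z
              + (hjx f 3 (v z + p z) * (deriv v z + deriv p z) * deriv p z
                + hjx f 2 (v z + p z) * iteratedDeriv 2 p z)) * deriv p z
            + (Dj f v p 2 z * deriv v z + hjx f 2 (v z + p z) * deriv p z) * iteratedDeriv 2 p z)
          + ((Dj f v p 2 z * deriv v z + hjx f 2 (v z + p z) * deriv p z) * iteratedDeriv 2 p z
            + Dj f v p 1 z * iteratedDeriv 3 p z))) := by
    funext z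
    have A1 := ((hasDerivAt_Ej hf hv hp 2 z).mul (hv1d z)).add
      ((hasDerivAt_Dj hf hv hp 2 z).mul (hp1d z))
    have T1 := A1.mul (hv1d z)
    have T2 := (hasDerivAt_Ej hf hv hp 1 z).mul (hv2d z)
    have A3 := ((hasDerivAt_Dj hf hv hp 2 z).mul (hv1d z)).add
      ((hasDerivAt_hjw hf hv hp 2 z).mul (hp1d z))
    have T3 := A3.mul (hp1d z)
    have T4 := (hasDerivAt_Dj hf hv hp 1 z).mul (hp2d z)
    exact (((T1.add T2).add (T3.add T4)).neg).deriv
  have hg3' : iteratedDeriv 3 (fun y => Fnl f (v y) (p y))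
      = fun z => -(((((Ej f v p 3 z * deriv v z + Dj f v p 3 z * deriv p z) * deriv v z
              + Ej f v p 2 z * iteratedDeriv 2 v z
              + ((Dj f v p 3 z * deriv v z + hjx f 3 (v z + p z) * deriv p z) * deriv p z
                + Dj f v p 2 z * iteratedDeriv 2 p z)) * deriv v z
            + (Ej f v p 2 z * deriv v z + Dj f v p 2 z * deriv p z) * iteratedDeriv 2 v z)
          + ((Ej f v p 2 z * deriv v z + Dj f v p 2 z * deriv p z) * iteratedDeriv 2 v z
            + Ej f v p 1 z * iteratedDeriv 3 v z))
        + ((((Dj f v p 3 z * deriv v z + hjx f 3 (v z + p z) * deriv p z) * deriv v z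
              + Dj f v p 2 z * iteratedDeriv 2 v z
              + (hjx f 3 (v z + p z) * (deriv v z + deriv p z) * deriv p z
                + hjx f 2 (v z + p z) * iteratedDeriv 2 p z)) * deriv p z
            + (Dj f v p 2 z * deriv v z + hjx f 2 (v z + p z) * deriv p z) * iteratedDeriv 2 p z)
          + ((Dj f v p 2 z * deriv v z + hjx f 2 (v z + p z) * deriv p z) * iteratedDeriv 2 p z
            + Dj f v p 1 z * iteratedDeriv 3 p z))) := by
    rw [e3, hg1, hg2, hg3]
  refine ⟨?_, ?_, ?_, ?_⟩
  · have h0 : Fnl f (v x) (p x) = -(Ej f v p 0 x) := congrFun hg0 x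
    rw [h0]
    exact poly0 hM (hEb 0 (by omega))
  · rw [hg1]
    exact poly1 hM (hEb 1 (by omega)) (hDb 1 (by omega) (by omega))
  · rw [hg2']
    exact poly2 hM (hEb 1 (by omega)) (hEb 2 (by omega))
      (hDb 1 (by omega) (by omega)) (hDb 2 (by omega) (by omega))
      (haw 2 (by omega) (by omega))
  · rw [hg3']
    exact poly3 hM (hEb 1 (by omega)) (hEb 2 (by omega)) (hEb 3 (by omega))
      (hDb 1 (by omega) (by omega)) (hDb 2 (by omega) (by omega)) (hDb 3 (by omega) (by omega))
      (haw 2 (by omega) (by omega)) (haw 3 (by omega) (by omega))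

end MASTER



lemma ptwise_sq_bound (ψ : ℝ → ℝ) (hψ : ContDiff ℝ (⊤ : ℕ∞) ψ) (ε : ℝ)
    (hInt1 : IntegrableOn (fun y => (deriv ψ y) ^ 2) (Ioi (0:ℝ)))
    (hInt2 : IntegrableOn (fun y => (iteratedDeriv 2 ψ y) ^ 2) (Ioi (0:ℝ)))
    (hB1 : ∫ y in Ioi (0:ℝ), (deriv ψ y) ^ 2 ≤ ε)
    (hB2 : ∫ y in Ioi (0:ℝ), (iteratedDeriv 2 ψ y) ^ 2 ≤ ε)
    {x : ℝ} (hx : 0 ≤ x) : (deriv ψ x) ^ 2 ≤ 2 * ε := by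
  have hd1 : ContDiff ℝ (⊤ : ℕ∞) (deriv ψ) := by
    have := hψ.iterate_deriv 1
    simpa using this
  have hc2 : Continuous (iteratedDeriv 2 ψ) := by
    have h := hψ.iterate_deriv 2
    rw [← iteratedDeriv_eq_iterate] at h
    exact h.continuous
  have hc1 : Continuous (deriv ψ) := hd1.continuous
  have hgd : ∀ y, HasDerivAt (fun z => (deriv ψ z) ^ 2)
      (2 * deriv ψ y * iteratedDeriv 2 ψ y) y := by
    intro y
    have h1 : HasDerivAt (deriv ψ) (iteratedDeriv 2 ψ y) y := by
      have := ((hd1.differentiable (by simp)).differentiableAt (x := y)).hasDerivAt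
      rwa [show deriv (deriv ψ) = iteratedDeriv 2 ψ by
        rw [iteratedDeriv_eq_iterate]; rfl] at this
    have h2 := h1.pow 2
    exact h2.congr_deriv (by norm_num)
  have hIntSum : IntegrableOn (fun y => (deriv ψ y) ^ 2 + (iteratedDeriv 2 ψ y) ^ 2) (Ioi (0:ℝ)) :=
    hInt1.add hInt2
  have hSumLe : (∫ y in Ioi (0:ℝ), ((deriv ψ y) ^ 2 + (iteratedDeriv 2 ψ y) ^ 2)) ≤ 2 * ε := by
    rw [integral_add hInt1 hInt2]
    linarith
  have key : ∀ δ : ℝ, 0 < δ → (deriv ψ x) ^ 2 ≤ 2 * ε + δ := by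
    intro δ hδ
    have hyex : ∃ y, x + 1 ≤ y ∧ (deriv ψ y) ^ 2 < δ := by
      by_contra hcon
      push_neg at hcon
      have hIntC : IntegrableOn (fun _ : ℝ => δ) (Ioi (x+1)) := by
        refine Integrable.mono' (hInt1.mono_set (fun y hy => lt_trans (show (0:ℝ) < x + 1 by linarith) hy))
          aestronglyMeasurable_const ?_
        refine (ae_restrict_iff' measurableSet_Ioi).mpr (Eventually.of_forall fun y hy => ?_)
        rw [Real.norm_eq_abs, abs_of_pos hδ]
        exact hcon y (le_of_lt hy)
      rcases (integrableOn_const_iff (C := δ)).mp hIntC with h | h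
      · simp at h; linarith
      · rw [Real.volume_Ioi] at h
        exact absurd h (lt_irrefl _)
    obtain ⟨y, hxy, hgy⟩ := hyex
    have hxy' : x ≤ y := by linarith
    have hFTC : (∫ z in x..y, 2 * deriv ψ z * iteratedDeriv 2 ψ z)
        = (deriv ψ y) ^ 2 - (deriv ψ x) ^ 2 :=
      intervalIntegral.integral_eq_sub_of_hasDerivAt (fun z _ => hgd z)
        (((continuous_const.mul hc1).mul hc2).intervalIntegrable _ _)
    have habs : |∫ z in x..y, 2 * deriv ψ z * iteratedDeriv 2 ψ z|
        ≤ ∫ z in x..y, |2 * deriv ψ z * iteratedDeriv 2 ψ z| :=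
      intervalIntegral.abs_integral_le_integral_abs hxy'
    have hmono : (∫ z in x..y, |2 * deriv ψ z * iteratedDeriv 2 ψ z|)
        ≤ ∫ z in x..y, ((deriv ψ z) ^ 2 + (iteratedDeriv 2 ψ z) ^ 2) := by
      refine intervalIntegral.integral_mono_on hxy'
        (((continuous_const.mul hc1).mul hc2).abs.intervalIntegrable _ _)
        (((hc1.pow 2).add (hc2.pow 2)).intervalIntegrable _ _) (fun z _ => ?_)
      have h1 := sq_nonneg (deriv ψ z - iteratedDeriv 2 ψ z)
      have h2 := sq_nonneg (deriv ψ z + iteratedDeriv 2 ψ z)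
      rw [abs_le]
      constructor <;> nlinarith
    have hIoc : (∫ z in x..y, ((deriv ψ z) ^ 2 + (iteratedDeriv 2 ψ z) ^ 2))
        = ∫ z in Ioc x y, ((deriv ψ z) ^ 2 + (iteratedDeriv 2 ψ z) ^ 2) :=
      intervalIntegral.integral_of_le hxy'
    have hsub : (∫ z in Ioc x y, ((deriv ψ z) ^ 2 + (iteratedDeriv 2 ψ z) ^ 2))
        ≤ ∫ z in Ioi (0:ℝ), ((deriv ψ z) ^ 2 + (iteratedDeriv 2 ψ z) ^ 2) := by
      refine setIntegral_mono_set hIntSum (Eventually.of_forall fun z => by positivity) ?_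
      exact HasSubset.Subset.eventuallyLE (fun z hz => lt_of_le_of_lt hx hz.1)
    have hchain : |∫ z in x..y, 2 * deriv ψ z * iteratedDeriv 2 ψ z| ≤ 2 * ε :=
      le_trans habs (le_trans hmono (le_trans (le_of_eq hIoc) (le_trans hsub hSumLe)))
    have h2 := abs_le.mp hchain
    linarith [h2.1, hgy, hFTC]
  by_contra hcon
  push_neg at hcon
  have := key (((deriv ψ x) ^ 2 - 2 * ε) / 2) (by linarith)
  linarith

end AUX

/-- Pointwise bounds on the flux nonlinearity F and its x-derivatives. -/
theorem F_nonlinearity_bounds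
    (m um s β d₀ : ℝ) (f U : ℝ → ℝ)
    (hm1 : 1/2 < m) (hm2 : m < 1)
    (hf : ContDiff ℝ (⊤ : ℕ∞) f) (hconv : ConvexOn ℝ Set.univ f) (hf0 : f 0 = 0)
    (hum : 0 < um) (hRH : s = f um / um) (hspos : 0 < s)
    (hlax1 : deriv f 0 < s) (hlax2 : s < deriv f um)
    (hU : IsShockProfile m um s f U)
    (hβ1 : 0 < β) (hβ2 : β ≤ (3 * m - 1) / (1 - m))
    (hd₀ : 0 < d₀) :
    ∃ ε > (0:ℝ), ∃ C > (0:ℝ), ∀ (T : ℝ) (φ : ℝ → ℝ → ℝ) (d : ℝ → ℝ),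
      0 < T → Reformulated m um s d₀ T f U φ d → MemX m s β d₀ T U φ d →
      Nsup m s β d₀ U φ d T ≤ ε →
      ∀ x, 0 < x → ∀ t ∈ Icc (0:ℝ) T,
        |Fnl f (U (x - s * t - d t)) (dxn 1 φ x t)| ≤ C * (dxn 1 φ x t) ^ 2 ∧
        |deriv (fun y => Fnl f (U (y - s * t - d t)) (dxn 1 φ y t)) x|
          ≤ C * (|deriv U (x - s * t - d t)| * (dxn 1 φ x t) ^ 2
              + |dxn 1 φ x t| * |dxn 2 φ x t|) ∧
        |iteratedDeriv 2 (fun y => Fnl f (U (y - s * t - d t)) (dxn 1 φ y t)) x|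
          ≤ C * (((deriv U (x - s * t - d t)) ^ 2 + |iteratedDeriv 2 U (x - s * t - d t)|)
                  * (dxn 1 φ x t) ^ 2
              + (dxn 2 φ x t) ^ 2
              + |deriv U (x - s * t - d t)| * |dxn 1 φ x t| * |dxn 2 φ x t|
              + |dxn 1 φ x t| * |dxn 3 φ x t|) ∧
        |iteratedDeriv 3 (fun y => Fnl f (U (y - s * t - d t)) (dxn 1 φ y t)) x|
          ≤ C * ((|deriv U (x - s * t - d t)| ^ 3
                  + |deriv U (x - s * t - d t)| * |iteratedDeriv 2 U (x - s * t - d t)|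
                  + |iteratedDeriv 3 U (x - s * t - d t)|) * (dxn 1 φ x t) ^ 2
              + ((deriv U (x - s * t - d t)) ^ 2 + |iteratedDeriv 2 U (x - s * t - d t)|)
                  * |dxn 1 φ x t| * |dxn 2 φ x t|
              + |deriv U (x - s * t - d t)| * |dxn 1 φ x t| * |dxn 3 φ x t|
              + |dxn 1 φ x t| * |dxn 4 φ x t|
              + |deriv U (x - s * t - d t)| * (dxn 2 φ x t) ^ 2
              + |dxn 2 φ x t| ^ 3
              + |dxn 2 φ x t| * |dxn 3 φ x t|) := by
  classical
  -- bound on the derivatives of f on the compact set K = [-1, um+1]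
  have hcont : ContinuousOn
      (fun z => |hjx f 2 z| + |hjx f 3 z| + |hjx f 4 z| + |hjx f 5 z|)
      (Icc (-1:ℝ) (um+1)) := by
    refine Continuous.continuousOn ?_
    exact (((((hj_smooth hf 2).continuous.abs.add
      (hj_smooth hf 3).continuous.abs).add
      (hj_smooth hf 4).continuous.abs).add
      (hj_smooth hf 5).continuous.abs))
  obtain ⟨M0, hM0⟩ := (isCompact_Icc (a := (-1:ℝ)) (b := um+1)).exists_bound_of_continuousOn hcont
  set M := max M0 1 with hMdef
  have hM : 1 ≤ M := le_max_right _ _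
  have hMb : ∀ j : ℕ, 2 ≤ j → j ≤ 5 → ∀ z ∈ Icc (-1:ℝ) (um+1), |hjx f j z| ≤ M := by
    intro j hj2 hj5 z hz
    have h := hM0 z hz
    rw [Real.norm_eq_abs] at h
    have habs : |hjx f 2 z| + |hjx f 3 z| + |hjx f 4 z| + |hjx f 5 z| ≤ M0 :=
      le_trans (le_abs_self _) h
    have hM0M : M0 ≤ M := le_max_left _ _
    interval_cases j <;>
      linarith [abs_nonneg (hjx f 2 z), abs_nonneg (hjx f 3 z), abs_nonneg (hjx f 4 z),
        abs_nonneg (hjx f 5 z)]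
  refine ⟨1/2, by norm_num, 3*M, by linarith, ?_⟩
  intro T φ d hT hRef hX hN x hx t ht
  have hUsm := hU.1
  have hUpos : ∀ z, 0 < U z := fun z => (hU.2.1 z).1
  have hUum : ∀ z, U z < um := fun z => (hU.2.1 z).2
  -- the time slice of φ
  set ψ : ℝ → ℝ := fun y => φ y t with hψdef
  have hψ : ContDiff ℝ (⊤ : ℕ∞) ψ := by
    rw [hψdef]
    exact hRef.φ_smooth.comp ((contDiff_id).prodMk contDiff_const)
  have hd1 : ContDiff ℝ (⊤ : ℕ∞) (deriv ψ) := by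
    have := hψ.iterate_deriv 1
    simpa using this
  have hc1 : Continuous (deriv ψ) := hd1.continuous
  have hc2 : Continuous (iteratedDeriv 2 ψ) := by
    have h := hψ.iterate_deriv 2
    rw [← iteratedDeriv_eq_iterate] at h
    exact h.continuous
  have hdxn1 : ∀ y, dxn 1 φ y t = deriv ψ y := by
    intro y
    show iteratedDeriv 1 (fun y => φ y t) y = deriv ψ y
    rw [← hψdef, iteratedDeriv_one]
  have hdxn2 : ∀ y, dxn 2 φ y t = iteratedDeriv 2 ψ y := fun y => rfl
  -- extract smallness of the weighted integrals from N(T) ≤ 1/2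
  have hle : Nfun m s β d₀ U φ d t ≤ 1/2 :=
    le_trans (le_csSup hX.1 ⟨t, ht, rfl⟩) hN
  have n1 : 0 ≤ (∫ x in Ioi (0:ℝ),
      U (x - s * t - d t) ^ (1 - 3 * m) * (φ x t) ^ 2) ^ (1/2 : ℝ) :=
    Real.rpow_nonneg (integral_nonneg fun y =>
      mul_nonneg (Real.rpow_nonneg (hUpos _).le _) (sq_nonneg _)) _
  have n2 : 0 ≤ (∫ x in Ioi (0:ℝ),
      U (x - s * t - d t) ^ (-(1 + m)) * (dxn 1 φ x t) ^ 2) ^ (1/2 : ℝ) :=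
    Real.rpow_nonneg (integral_nonneg fun y =>
      mul_nonneg (Real.rpow_nonneg (hUpos _).le _) (sq_nonneg _)) _
  have n3 : 0 ≤ (∫ x in Ioi (0:ℝ),
      U (x - s * t - d t) ^ (m - 3) * (dxn 2 φ x t) ^ 2) ^ (1/2 : ℝ) :=
    Real.rpow_nonneg (integral_nonneg fun y =>
      mul_nonneg (Real.rpow_nonneg (hUpos _).le _) (sq_nonneg _)) _
  have n4each : ∀ j : ℕ, 0 ≤ ∫ x in Ioi (0:ℝ),
      jb (x - s * t - d t) ^ (β + (j : ℝ)) * (dxn j φ x t) ^ 2 := fun j =>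
    integral_nonneg fun y =>
      mul_nonneg (Real.rpow_nonneg (Real.sqrt_nonneg _) _) (sq_nonneg _)
  have n4 : 0 ≤ ∑ j ∈ Finset.range 4, ∫ x in Ioi (0:ℝ),
      jb (x - s * t - d t) ^ (β + (j : ℝ)) * (dxn j φ x t) ^ 2 :=
    Finset.sum_nonneg fun j _ => n4each j
  have n5 : 0 ≤ (d₀ + t) ^ ((β + 3) / 2) * |dxn 2 φ 0 t| :=
    mul_nonneg (Real.rpow_nonneg (by linarith [ht.1]) _) (abs_nonneg _)
  have n6 : 0 ≤ (∫ τ in Set.Ioc (0:ℝ) t,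
      (d₀ + τ) ^ (β + 3) * (dxn 2 φ 0 τ) ^ 2) ^ (1/2 : ℝ) :=
    Real.rpow_nonneg (setIntegral_nonneg measurableSet_Ioc fun τ hτ =>
      mul_nonneg (Real.rpow_nonneg (by linarith [hτ.1]) _) (sq_nonneg _)) _
  have hT4 : (∑ j ∈ Finset.range 4, ∫ x in Ioi (0:ℝ),
      jb (x - s * t - d t) ^ (β + (j : ℝ)) * (dxn j φ x t) ^ 2) ^ (1/2 : ℝ) ≤ 1/2 := by
    have h := hle
    simp only [Nfun] at h
    linarith
  have hS : (∑ j ∈ Finset.range 4, ∫ x in Ioi (0:ℝ),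
      jb (x - s * t - d t) ^ (β + (j : ℝ)) * (dxn j φ x t) ^ 2) ≤ 1/4 := by
    set S := ∑ j ∈ Finset.range 4, ∫ x in Ioi (0:ℝ),
      jb (x - s * t - d t) ^ (β + (j : ℝ)) * (dxn j φ x t) ^ 2 with hSdef
    have hSeq : S = (S ^ (1/2 : ℝ)) ^ (2:ℕ) := by
      rw [← Real.rpow_natCast (S ^ (1/2:ℝ)) 2, ← Real.rpow_mul n4]
      norm_num
    rw [hSeq]
    calc (S ^ (1/2:ℝ)) ^ (2:ℕ) ≤ (1/2:ℝ) ^ (2:ℕ) :=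
          pow_le_pow_left₀ (Real.rpow_nonneg n4 _) hT4 2
      _ = 1/4 := by norm_num
  have hI : ∀ j : ℕ, j < 4 → (∫ x in Ioi (0:ℝ),
      jb (x - s * t - d t) ^ (β + (j : ℝ)) * (dxn j φ x t) ^ 2) ≤ 1/4 := by
    intro j hj
    refine le_trans ?_ hS
    exact Finset.single_le_sum (fun i _ => n4each i) (Finset.mem_range.mpr hj)
  -- weights are at least 1
  have hjb1 : ∀ (z : ℝ) (e : ℝ), 0 ≤ e → (1:ℝ) ≤ jb z ^ e := by
    intro z e he
    have h1 : (1:ℝ) ≤ jb z := by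
      have := Real.sqrt_le_sqrt (show (1:ℝ) ≤ 1 + z ^ 2 by nlinarith [sq_nonneg z])
      rwa [Real.sqrt_one] at this
    calc (1:ℝ) = jb z ^ (0:ℝ) := (Real.rpow_zero _).symm
      _ ≤ jb z ^ e := Real.rpow_le_rpow_of_exponent_le h1 he
  have hw1 : ∀ y : ℝ, (deriv ψ y) ^ 2
      ≤ jb (y - s * t - d t) ^ (β + ((1:ℕ) : ℝ)) * (dxn 1 φ y t) ^ 2 := by
    intro y
    rw [hdxn1 y]
    exact le_mul_of_one_le_left (sq_nonneg _) (hjb1 _ _ (by push_cast; linarith))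
  have hw2 : ∀ y : ℝ, (iteratedDeriv 2 ψ y) ^ 2
      ≤ jb (y - s * t - d t) ^ (β + ((2:ℕ) : ℝ)) * (dxn 2 φ y t) ^ 2 := by
    intro y
    rw [hdxn2 y]
    exact le_mul_of_one_le_left (sq_nonneg _) (hjb1 _ _ (by push_cast; linarith))
  have hIntW1 := (hX.2.1 t ht).2.2.2 1 (by norm_num)
  have hIntW2 := (hX.2.1 t ht).2.2.2 2 (by norm_num)
  have hInt1 : IntegrableOn (fun y => (deriv ψ y) ^ 2) (Ioi (0:ℝ)) := by
    refine Integrable.mono' hIntW1 ((hc1.pow 2).aestronglyMeasurable)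
      (Filter.Eventually.of_forall fun y => ?_)
    rw [Real.norm_eq_abs, abs_of_nonneg (sq_nonneg _)]
    exact hw1 y
  have hInt2 : IntegrableOn (fun y => (iteratedDeriv 2 ψ y) ^ 2) (Ioi (0:ℝ)) := by
    refine Integrable.mono' hIntW2 ((hc2.pow 2).aestronglyMeasurable)
      (Filter.Eventually.of_forall fun y => ?_)
    rw [Real.norm_eq_abs, abs_of_nonneg (sq_nonneg _)]
    exact hw2 y
  have hB1 : (∫ y in Ioi (0:ℝ), (deriv ψ y) ^ 2) ≤ 1/4 :=
    le_trans (setIntegral_mono_on hInt1 hIntW1 measurableSet_Ioi (fun y _ => hw1 y))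
      (hI 1 (by norm_num))
  have hB2 : (∫ y in Ioi (0:ℝ), (iteratedDeriv 2 ψ y) ^ 2) ≤ 1/4 :=
    le_trans (setIntegral_mono_on hInt2 hIntW2 measurableSet_Ioi (fun y _ => hw2 y))
      (hI 2 (by norm_num))
  have hpsq : (deriv ψ x) ^ 2 ≤ 2 * (1/4) :=
    ptwise_sq_bound ψ hψ (1/4) hInt1 hInt2 hB1 hB2 hx.le
  have hpx : |dxn 1 φ x t| ≤ 1 := by
    rw [hdxn1 x]
    nlinarith [abs_nonneg (deriv ψ x), sq_abs (deriv ψ x)]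
  -- apply the master lemma
  have hpfun : (fun y => dxn 1 φ y t) = deriv ψ := by
    funext y
    exact hdxn1 y
  have hpsm : ContDiff ℝ (⊤ : ℕ∞) (fun y => dxn 1 φ y t) := by
    rw [hpfun]
    exact hd1
  have hvsm : ContDiff ℝ (⊤ : ℕ∞) (fun y => U (y - s * t - d t)) := by
    refine hUsm.comp ?_
    exact (contDiff_id.sub contDiff_const).sub contDiff_const
  have hUc : ∀ n : ℕ, iteratedDeriv n (fun y => U (y - s * t - d t)) x
      = iteratedDeriv n U (x - s * t - d t) := by
    intro n
    have h1 : (fun y => U (y - s * t - d t)) = fun y => U (y + -(s * t + d t)) := by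
      funext y
      congr 1
      ring
    rw [h1, iteratedDeriv_comp_add_const]
    congr 1
    ring
  have hv1 : deriv (fun y => U (y - s * t - d t)) x = deriv U (x - s * t - d t) := by
    have h := hUc 1
    rwa [iteratedDeriv_one, iteratedDeriv_one] at h
  have hv2 := hUc 2
  have hv3 := hUc 3
  have hderiv2 : deriv (deriv ψ) = iteratedDeriv 2 ψ := by
    rw [iteratedDeriv_eq_iterate]
    rfl
  have hdp1 : deriv (fun y => dxn 1 φ y t) x = dxn 2 φ x t := by
    rw [hpfun, hderiv2]
    exact (hdxn2 x).symm
  have hdp2 : iteratedDeriv 2 (fun y => dxn 1 φ y t) x = dxn 3 φ x t := by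
    rw [hpfun]
    exact congrFun (iteratedDeriv_succ' (n := 2) (f := ψ)).symm x
  have hdp3 : iteratedDeriv 3 (fun y => dxn 1 φ y t) x = dxn 4 φ x t := by
    rw [hpfun]
    exact congrFun (iteratedDeriv_succ' (n := 3) (f := ψ)).symm x
  obtain ⟨P1, P2, P3, P4⟩ := Fnl_master hf hvsm hpsm (le_of_lt hum) hM hMb x
    (hUpos _).le (hUum _).le hpx
  refine ⟨P1, ?_, ?_, ?_⟩
  · rw [hv1, hdp1] at P2
    exact P2
  · rw [hv1, hv2, hdp1, hdp2] at P3
    exact P3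
  · rw [hv1, hv2, hv3, hdp1, hdp2, hdp3] at P4
    exact P4


end
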